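/- arXiv:2009.07401 — 2 statements merged into one kernel-verified Lean document; each statement's English description precedes it below -/
import Mathlib

section
/- Let X be an Archimedean vector lattice and Y an order ideal of the order dual X~ that separates the points of X. If the canonical image of X in the order dual Y~ is a regular sublattice (i.e., the embedding preserves infima of downward directed sets), then every functional in Y is order continuous on X. -/
set_option linter.unusedSectionVars false
set_option maxHeartbeats 1000000

open Filter Set

section ODual

variable (E : Type*) [AddCommGroup E] [Preorder E] [Module ℝ E]

/-- The order (bounded) dual: linear functionals bounded on order intervals. -/
noncomputable def obDual : Submodule ℝ (E →ₗ[ℝ] ℝ) where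
  carrier := {f | ∀ w : E, ∃ M : ℝ, ∀ x : E, -w ≤ x → x ≤ w → |f x| ≤ M}
  zero_mem' := fun w => ⟨0, fun x _ _ => by simp⟩
  add_mem' := fun {f g} hf hg w => by
    obtain ⟨M, hM⟩ := hf w
    obtain ⟨N, hN⟩ := hg w
    refine ⟨M + N, fun x h1 h2 => ?_⟩
    calc |(f + g) x| = |f x + g x| := by simp
    _ ≤ |f x| + |g x| := abs_add_le _ _
    _ ≤ M + N := add_le_add (hM x h1 h2) (hN x h1 h2)
  smul_mem' := fun c f hf => by
    intro w
    obtain ⟨M, hM⟩ := hf w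
    refine ⟨|c| * M, fun x h1 h2 => ?_⟩
    calc |(c • f) x| = |c| * |f x| := by simp [abs_mul]
    _ ≤ |c| * M := mul_le_mul_of_nonneg_left (hM x h1 h2) (abs_nonneg c)

/-- The pointwise-on-positive-elements (pre)order on a space of functionals. -/
instance instSubPre (Y : Submodule ℝ (E →ₗ[ℝ] ℝ)) : Preorder Y where
  le f g := ∀ x : E, 0 ≤ x → (f : E →ₗ[ℝ] ℝ) x ≤ (g : E →ₗ[ℝ] ℝ) x
  le_refl f x _ := le_rfl
  le_trans f g h h1 h2 x hx := (h1 x hx).trans (h2 x hx)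

/-- The same preorder on the order dual of `Y` (instance search no longer finds it alone). -/
noncomputable instance instSubPreDual (Y : Submodule ℝ (E →ₗ[ℝ] ℝ)) : Preorder (obDual ↥Y) :=
  instSubPre ↥Y (obDual ↥Y)

variable {E}

theorem subPre_le_iff {Y : Submodule ℝ (E →ₗ[ℝ] ℝ)} {f g : Y} :
    f ≤ g ↔ ∀ x : E, 0 ≤ x → (f : E →ₗ[ℝ] ℝ) x ≤ (g : E →ₗ[ℝ] ℝ) x := Iff.rfl

/-- Order convergence of a net to a limit (sandwich form: eventually
`l - d ≤ x_α ≤ l + d` for every `d` in a set directed downward to `0`). -/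
def OConvTo {ι : Type*} [Preorder ι] (x : ι → E) (l : E) : Prop :=
  ∃ D : Set E, D.Nonempty ∧ DirectedOn (· ≥ ·) D ∧ IsGLB D 0 ∧
    ∀ d ∈ D, ∃ α₀ : ι, ∀ α, α₀ ≤ α → l - d ≤ x α ∧ x α ≤ l + d

/-- Order continuity of a linear functional: `f(x_α) → 0` whenever `x_α ↓ 0`. -/
def OrdContE (f : E →ₗ[ℝ] ℝ) : Prop :=
  ∀ D : Set E, D.Nonempty → DirectedOn (· ≥ ·) D → IsGLB D 0 →
    ∀ ε : ℝ, 0 < ε → ∃ d ∈ D, ∀ e ∈ D, e ≤ d → |f e| < ε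

end ODual

section VL

variable (X : Type*) [Lattice X] [AddCommGroup X]
  [CovariantClass X X (· + ·) (· ≤ ·)] [Module ℝ X] [PosSMulMono ℝ X]

variable {X} in
/-- Unbounded order convergence: `|x_α - l| ⊓ u →o 0` for every `u ≥ 0`. -/
def uoConvTo {ι : Type*} [Preorder ι] (x : ι → X) (l : X) : Prop :=
  ∀ u : X, 0 ≤ u → OConvTo (fun α => |x α - l| ⊓ u) (0 : X)

/-- The canonical evaluation of `x ∈ X` on a space `Y` of functionals on `X`. -/
def hatFun (Y : Submodule ℝ (X →ₗ[ℝ] ℝ)) (x : X) : Y →ₗ[ℝ] ℝ where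
  toFun f := (f : X →ₗ[ℝ] ℝ) x
  map_add' f g := by simp
  map_smul' c f := by simp

theorem hatFun_mem (Y : Submodule ℝ (X →ₗ[ℝ] ℝ)) (x : X) :
    hatFun X Y x ∈ obDual Y := by
  intro w
  refine ⟨(w : X →ₗ[ℝ] ℝ) (x⁺) + (w : X →ₗ[ℝ] ℝ) (x⁻), fun f h1 h2 => ?_⟩
  have hp : (0 : X) ≤ x⁺ := posPart_nonneg x
  have hn : (0 : X) ≤ x⁻ := negPart_nonneg x
  have e1 := (subPre_le_iff.mp h1) _ hp
  have e2 := (subPre_le_iff.mp h2) _ hp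
  have e3 := (subPre_le_iff.mp h1) _ hn
  have e4 := (subPre_le_iff.mp h2) _ hn
  have c1 : -((w : X →ₗ[ℝ] ℝ) (x⁺)) ≤ (f : X →ₗ[ℝ] ℝ) (x⁺) := by simpa using e1
  have c3 : -((w : X →ₗ[ℝ] ℝ) (x⁻)) ≤ (f : X →ₗ[ℝ] ℝ) (x⁻) := by simpa using e3
  have key : (f : X →ₗ[ℝ] ℝ) x
      = (f : X →ₗ[ℝ] ℝ) (x⁺) - (f : X →ₗ[ℝ] ℝ) (x⁻) := by
    rw [← map_sub, posPart_sub_negPart]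
  show |(f : X →ₗ[ℝ] ℝ) x| ≤ _
  rw [key]
  have a1 : |(f : X →ₗ[ℝ] ℝ) (x⁺)| ≤ (w : X →ₗ[ℝ] ℝ) (x⁺) := abs_le.mpr ⟨c1, e2⟩
  have a2 : |(f : X →ₗ[ℝ] ℝ) (x⁻)| ≤ (w : X →ₗ[ℝ] ℝ) (x⁻) := abs_le.mpr ⟨c3, e4⟩
  have := abs_sub ((f : X →ₗ[ℝ] ℝ) (x⁺)) ((f : X →ₗ[ℝ] ℝ) (x⁻))
  linarith

/-- The canonical embedding of `X` into the order dual of `Y ⊆ X~`. -/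
def hatEl (Y : Submodule ℝ (X →ₗ[ℝ] ℝ)) (x : X) : obDual Y :=
  ⟨hatFun X Y x, hatFun_mem X Y x⟩

/-- `X~` separates the points of `X`. -/
def SepPoints : Prop := ∀ x : X, x ≠ 0 → ∃ f : obDual X, (f : X →ₗ[ℝ] ℝ) x ≠ 0

/-- The canonical image of `X` in `X~~` is a regular sublattice:
`x_α ↓ 0` in `X` implies `x̂_α ↓ 0` in `X~~`. -/
def HatRegular : Prop :=
  ∀ D : Set X, D.Nonempty → DirectedOn (· ≥ ·) D → IsGLB D 0 →
    IsGLB (hatEl X (obDual X) '' D) (0 : obDual ↥(obDual X))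

variable {X} in
/-- The net `x̂_α` is eventually order bounded in `X~~`. -/
def HatEvOB {ι : Type*} [Preorder ι] (x : ι → X) : Prop :=
  ∃ (b t : obDual ↥(obDual X)) (α₀ : ι), ∀ α, α₀ ≤ α →
    b ≤ hatEl X (obDual X) (x α) ∧ hatEl X (obDual X) (x α) ≤ t

variable {X} in
/-- Bidual bounded uo-convergence. -/
def bbuoConvTo {ι : Type*} [Preorder ι] (x : ι → X) (l : X) : Prop :=
  uoConvTo x l ∧ HatEvOB x

/-- `X` has the `b`-property: every subset of `X` whose canonical image is
order bounded in `X~~` is order bounded in `X`. -/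
def HasBProp : Prop :=
  ∀ A : Set X,
    (∃ b t : obDual ↥(obDual X), ∀ a ∈ A,
        b ≤ hatEl X (obDual X) a ∧ hatEl X (obDual X) a ≤ t) →
    ∃ b t : X, ∀ a ∈ A, b ≤ a ∧ a ≤ t

/-- The Archimedean property for a lattice-ordered group. -/
def IsArch : Prop := ∀ x y : X, 0 ≤ x → (∀ n : ℕ, n • x ≤ y) → x = 0

end VL


/-- `Y` is an order ideal of the order dual `X~`: a linear subspace of order bounded
functionals that is solid (via the Riesz–Kantorovich formula for the modulus). -/
def IsIdealOfOrderDual {X : Type u} [Lattice X] [AddCommGroup X]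
    [CovariantClass X X (· + ·) (· ≤ ·)] [Module ℝ X] [PosSMulMono ℝ X]
    (Y : Submodule ℝ (X →ₗ[ℝ] ℝ)) : Prop :=
  Y ≤ obDual X ∧
  ∀ f ∈ Y, ∀ g ∈ obDual X,
    (∀ x : X, 0 ≤ x → ∀ z : X, |z| ≤ x →
      |g z| ≤ sSup ((fun w => |f w|) '' {w : X | |w| ≤ x})) → g ∈ Y


/-!
Let `D ↓ 0` in `X`. Every `g ∈ Y` lies below some positive `h ∈ Y` (the Riesz–Kantorovich
positive part `h = g⁺`, which stays in `Y` because `Y` is an ideal), so `g = h - (h - g)` is a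
difference of positive functionals and `g(d)` converges along `D` by monotonicity. The pointwise
limit `B` is an order bounded functional on `Y` and a lower bound of `D̂` in `Y~`; regularity of
`X̂` forces `B ≤ 0`, while `B ≥ 0` on positive functionals. Hence `B = 0`, that is, `g(d) → 0`.
-/

section PositiveCone

variable {X : Type*} [Lattice X] [AddCommGroup X] [CovariantClass X X (· + ·) (· ≤ ·)]
  [Module ℝ X]

theorem sub_eq_sub_of_add_nonneg {p : X → ℝ}
    (hadd : ∀ x y : X, 0 ≤ x → 0 ≤ y → p (x + y) = p x + p y)
    {a b a' b' : X} (ha : 0 ≤ a) (hb : 0 ≤ b) (ha' : 0 ≤ a') (hb' : 0 ≤ b')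
    (h : a - b = a' - b') : p a - p b = p a' - p b' := by
  have hsum : a + b' = a' + b := by rw [← sub_add_cancel a b, h]; abel
  have := congrArg p hsum
  rw [hadd _ _ ha hb', hadd _ _ ha' hb] at this
  linarith

variable [PosSMulMono ℝ X]

def LinearMap.ofNonnegAdditive (p : X → ℝ)
    (hadd : ∀ x y : X, 0 ≤ x → 0 ≤ y → p (x + y) = p x + p y)
    (hsmul : ∀ (c : ℝ) (x : X), 0 ≤ c → 0 ≤ x → p (c • x) = c * p x) : X →ₗ[ℝ] ℝ where
  toFun x := p x⁺ - p x⁻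
  map_add' x y := by
    have hx := posPart_nonneg x; have hx' := negPart_nonneg x
    have hy := posPart_nonneg y; have hy' := negPart_nonneg y
    rw [sub_eq_sub_of_add_nonneg hadd (posPart_nonneg _) (negPart_nonneg _)
        (add_nonneg hx hy) (add_nonneg hx' hy')
        (by rw [posPart_sub_negPart, add_sub_add_comm, posPart_sub_negPart,
          posPart_sub_negPart]),
      hadd _ _ hx hy, hadd _ _ hx' hy']
    ring
  map_smul' c x := by
    have hx := posPart_nonneg x; have hx' := negPart_nonneg x
    simp only [RingHom.id_apply, smul_eq_mul]
    rcases le_or_gt 0 c with hc | hc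
    · rw [sub_eq_sub_of_add_nonneg hadd (posPart_nonneg _) (negPart_nonneg _)
          (smul_nonneg hc hx) (smul_nonneg hc hx')
          (by rw [posPart_sub_negPart, ← smul_sub, posPart_sub_negPart]),
        hsmul _ _ hc hx, hsmul _ _ hc hx']
      ring
    · have hc' : 0 ≤ -c := by linarith
      rw [sub_eq_sub_of_add_nonneg hadd (posPart_nonneg _) (negPart_nonneg _)
          (smul_nonneg hc' hx') (smul_nonneg hc' hx)
          (by rw [posPart_sub_negPart, ← smul_sub, neg_smul, ← smul_neg, neg_sub,
            posPart_sub_negPart]),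
        hsmul _ _ hc' hx', hsmul _ _ hc' hx]
      ring

theorem LinearMap.ofNonnegAdditive_apply (p : X → ℝ) {hadd hsmul} (x : X) :
    LinearMap.ofNonnegAdditive p hadd hsmul x = p x⁺ - p x⁻ := rfl

end PositiveCone

section RieszKantorovich

open scoped Pointwise

variable {X : Type*} [Lattice X] [AddCommGroup X] [CovariantClass X X (· + ·) (· ≤ ·)]
  [Module ℝ X] [PosSMulMono ℝ X] {f : X →ₗ[ℝ] ℝ}

noncomputable def supImageIcc (f : X →ₗ[ℝ] ℝ) (x : X) : ℝ := sSup (f '' Icc 0 x)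

theorem bddAbove_image_Icc (hf : f ∈ obDual X) (x : X) : BddAbove (f '' Icc 0 x) := by
  obtain ⟨M, hM⟩ := hf x
  refine ⟨M, ?_⟩
  rintro _ ⟨w, ⟨hw0, hwx⟩, rfl⟩
  exact (le_abs_self _).trans (hM w ((neg_nonpos.2 (hw0.trans hwx)).trans hw0) hwx)

theorem le_supImageIcc (hf : f ∈ obDual X) {w x : X} (hw : w ∈ Icc 0 x) :
    f w ≤ supImageIcc f x :=
  le_csSup (bddAbove_image_Icc hf x) (mem_image_of_mem f hw)

theorem supImageIcc_nonneg (hf : f ∈ obDual X) {x : X} (hx : 0 ≤ x) : 0 ≤ supImageIcc f x := by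
  simpa using le_supImageIcc hf ⟨le_rfl, hx⟩

theorem supImageIcc_mono (hf : f ∈ obDual X) {x y : X} (hx : 0 ≤ x) (hxy : x ≤ y) :
    supImageIcc f x ≤ supImageIcc f y :=
  csSup_le_csSup (bddAbove_image_Icc hf y) ((nonempty_Icc.2 hx).image f)
    (image_mono (Icc_subset_Icc le_rfl hxy))

theorem image_Icc_add (f : X →ₗ[ℝ] ℝ) {x y : X} (hx : 0 ≤ x) (hy : 0 ≤ y) :
    f '' Icc 0 (x + y) = f '' Icc 0 x + f '' Icc 0 y := by
  apply Subset.antisymm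
  · rintro _ ⟨w, ⟨hw0, hwxy⟩, rfl⟩
    -- Riesz decomposition: `w = w ⊓ x + (w - w ⊓ x)` with summands in `[0, x]` and `[0, y]`
    have hwx : w ⊓ x ∈ Icc 0 x := ⟨le_inf hw0 hx, inf_le_right⟩
    have hwy : w - w ⊓ x ∈ Icc 0 y :=
      ⟨sub_nonneg.2 inf_le_left,
        sub_le_comm.2 (le_inf (sub_le_self w hy) (sub_le_iff_le_add.2 hwxy))⟩
    exact ⟨_, mem_image_of_mem f hwx, _, mem_image_of_mem f hwy,
      by simp only [← map_add, add_sub_cancel]⟩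
  · rintro _ ⟨_, ⟨u, hu, rfl⟩, _, ⟨v, hv, rfl⟩, rfl⟩
    exact ⟨u + v, ⟨add_nonneg hu.1 hv.1, add_le_add hu.2 hv.2⟩, map_add f u v⟩

theorem supImageIcc_add (hf : f ∈ obDual X) {x y : X} (hx : 0 ≤ x) (hy : 0 ≤ y) :
    supImageIcc f (x + y) = supImageIcc f x + supImageIcc f y := by
  rw [supImageIcc, image_Icc_add f hx hy, csSup_add ((nonempty_Icc.2 hx).image f)
    (bddAbove_image_Icc hf x) ((nonempty_Icc.2 hy).image f) (bddAbove_image_Icc hf y)]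
  rfl

theorem supImageIcc_smul (f : X →ₗ[ℝ] ℝ) {c : ℝ} {x : X} (hc : 0 ≤ c) (hx : 0 ≤ x) :
    supImageIcc f (c • x) = c * supImageIcc f x := by
  have hIcc : Icc 0 (c • x) = c • Icc 0 x := by
    rcases hc.eq_or_lt with rfl | hc
    · rw [zero_smul, zero_smul_set (nonempty_Icc.2 hx), Icc_self, singleton_zero]
    · have := (OrderIso.smulRight (β := X) hc).image_Icc 0 x
      rw [OrderIso.smulRight_apply, OrderIso.smulRight_apply, smul_zero] at this
      rw [← this, ← image_smul]
      rfl
  rw [supImageIcc, hIcc, image_smul_set, Real.sSup_smul_of_nonneg hc, smul_eq_mul]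
  rfl

theorem supImageIcc_zero (f : X →ₗ[ℝ] ℝ) : supImageIcc f 0 = 0 := by
  simpa using supImageIcc_smul f (c := 0) le_rfl le_rfl

/-- The positive part `f⁺` of `f ∈ X~`, by the Riesz–Kantorovich formula. -/
noncomputable def obDualPosPart (f : X →ₗ[ℝ] ℝ) (hf : f ∈ obDual X) : X →ₗ[ℝ] ℝ :=
  LinearMap.ofNonnegAdditive (supImageIcc f) (fun _ _ => supImageIcc_add hf)
    (fun _ _ => supImageIcc_smul f)

theorem obDualPosPart_apply_of_nonneg (hf : f ∈ obDual X) {x : X} (hx : 0 ≤ x) :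
    obDualPosPart f hf x = supImageIcc f x := by
  rw [obDualPosPart, LinearMap.ofNonnegAdditive_apply, posPart_eq_self.2 hx,
    negPart_eq_zero.2 hx, supImageIcc_zero, sub_zero]

theorem abs_obDualPosPart_le (hf : f ∈ obDual X) {x z : X} (hzx : |z| ≤ x) :
    |obDualPosPart f hf z| ≤ supImageIcc f x := by
  obtain ⟨hz, hnz⟩ := abs_le'.1 hzx
  have hx : 0 ≤ x := (abs_nonneg z).trans hzx
  have hpos := supImageIcc_mono hf (posPart_nonneg z) (sup_le hz hx)
  have hneg := supImageIcc_mono hf (negPart_nonneg z) (sup_le hnz hx)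
  have := supImageIcc_nonneg hf (posPart_nonneg z)
  have := supImageIcc_nonneg hf (negPart_nonneg z)
  rw [obDualPosPart, LinearMap.ofNonnegAdditive_apply, abs_le]
  constructor <;> linarith

theorem obDualPosPart_mem_obDual (hf : f ∈ obDual X) : obDualPosPart f hf ∈ obDual X :=
  fun w => ⟨supImageIcc f w, fun _ h₁ h₂ =>
    abs_obDualPosPart_le hf (abs_le'.2 ⟨h₂, neg_le.1 h₁⟩)⟩

theorem supImageIcc_le_sSup_abs (hf : f ∈ obDual X) {x : X} (hx : 0 ≤ x) :
    supImageIcc f x ≤ sSup ((fun w => |f w|) '' {w : X | |w| ≤ x}) := by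
  have hbdd : BddAbove ((fun w => |f w|) '' {w : X | |w| ≤ x}) := by
    obtain ⟨M, hM⟩ := hf x
    refine ⟨M, ?_⟩
    rintro _ ⟨w, hw, rfl⟩
    obtain ⟨hwx, hnwx⟩ := abs_le'.1 hw
    exact hM w (neg_le.1 hnwx) hwx
  refine csSup_le ((nonempty_Icc.2 hx).image f) ?_
  rintro _ ⟨w, ⟨hw0, hwx⟩, rfl⟩
  exact (le_abs_self (f w)).trans
    (le_csSup hbdd ⟨w, (abs_of_nonneg hw0).trans_le hwx, rfl⟩)

theorem IsIdealOfOrderDual.obDualPosPart_mem {Y : Submodule ℝ (X →ₗ[ℝ] ℝ)}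
    (hY : IsIdealOfOrderDual Y) (hf : f ∈ Y) : obDualPosPart f (hY.1 hf) ∈ Y :=
  hY.2 f hf _ (obDualPosPart_mem_obDual _) fun _ hx _ hzx =>
    (abs_obDualPosPart_le _ hzx).trans (supImageIcc_le_sSup_abs (hY.1 hf) hx)

theorem IsIdealOfOrderDual.exists_nonneg_ge {Y : Submodule ℝ (X →ₗ[ℝ] ℝ)}
    (hY : IsIdealOfOrderDual Y) (f : Y) : ∃ g : Y, 0 ≤ g ∧ f ≤ g := by
  refine ⟨⟨_, hY.obDualPosPart_mem f.2⟩, fun x hx => ?_, fun x hx => ?_⟩ <;>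
    simp only [Submodule.coe_zero, LinearMap.zero_apply, obDualPosPart_apply_of_nonneg _ hx]
  · exact supImageIcc_nonneg (hY.1 f.2) hx
  · exact le_supImageIcc (hY.1 f.2) ⟨hx, le_rfl⟩

end RieszKantorovich

open scoped Topology

theorem exists_linearMap_tendsto {R M N ι : Type*} [Semiring R] [AddCommMonoid M] [Module R M]
    [TopologicalSpace N] [AddCommMonoid N] [Module R N] [T2Space N] [ContinuousAdd N]
    [ContinuousConstSMul R N] {l : Filter ι} [l.NeBot] (φ : ι → M →ₗ[R] N)
    (h : ∀ g, ∃ a, Tendsto (fun i => φ i g) l (𝓝 a)) :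
    ∃ B : M →ₗ[R] N, ∀ g, Tendsto (fun i => φ i g) l (𝓝 (B g)) := by
  choose B hB using h
  exact ⟨linearMapOfTendsto B φ (tendsto_pi_nhds.2 hB), hB⟩

theorem ordContE_of_tendsto {E : Type*} [AddCommGroup E] [Preorder E] [Module ℝ E]
    {f : E →ₗ[ℝ] ℝ}
    (h : ∀ D : Set E, D.Nonempty → DirectedOn (· ≥ ·) D → IsGLB D 0 →
      Tendsto (fun d : D => f d) atBot (𝓝 0)) : OrdContE f := by
  intro D hne hdir hglb ε hε
  have := hne.to_subtype
  have := hdir.isCodirectedOrder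
  obtain ⟨⟨d, hd⟩, hlt⟩ :=
    eventually_atBot.1 (Metric.tendsto_nhds.1 (h D hne hdir hglb) ε hε)
  exact ⟨d, hd, fun e he hed => by simpa using hlt ⟨e, he⟩ hed⟩

section Functionals

variable {E : Type*} [AddCommGroup E] [Preorder E] [AddLeftMono E] [Module ℝ E]
  {Y : Submodule ℝ (E →ₗ[ℝ] ℝ)} {g h : Y}

theorem subPre_apply_nonneg (hg : 0 ≤ g) {x : E} (hx : 0 ≤ x) : 0 ≤ (g : E →ₗ[ℝ] ℝ) x := by
  simpa using hg x hx

theorem subPre_monotone (hg : 0 ≤ g) : Monotone (g : E →ₗ[ℝ] ℝ) := fun x y hxy => by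
  simpa using subPre_apply_nonneg hg (sub_nonneg.2 hxy)

theorem subPre_sub_nonneg (hgh : g ≤ h) : 0 ≤ h - g := fun x hx => by
  simpa using hgh x hx

end Functionals

section Limits

variable {X : Type*} [Lattice X] [AddCommGroup X] [CovariantClass X X (· + ·) (· ≤ ·)]
  [Module ℝ X] [PosSMulMono ℝ X] {Y : Submodule ℝ (X →ₗ[ℝ] ℝ)}

@[simp]
theorem hatFun_apply (x : X) (g : Y) : hatFun X Y x g = (g : X →ₗ[ℝ] ℝ) x := rfl

theorem exists_tendsto_atBot_of_nonneg {D : Set X} (hD : 0 ∈ lowerBounds D) {g : Y}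
    (hg : 0 ≤ g) : ∃ a, Tendsto (fun d : D => (g : X →ₗ[ℝ] ℝ) d) atBot (𝓝 a) :=
  ⟨_, tendsto_atBot_ciInf (fun _ _ hde => subPre_monotone hg hde)
    ⟨0, by rintro _ ⟨d, rfl⟩; exact subPre_apply_nonneg hg (hD d.2)⟩⟩

theorem IsIdealOfOrderDual.exists_tendsto_atBot (hY : IsIdealOfOrderDual Y) {D : Set X}
    (hD : 0 ∈ lowerBounds D) (g : Y) :
    ∃ a, Tendsto (fun d : D => (g : X →ₗ[ℝ] ℝ) d) atBot (𝓝 a) := by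
  obtain ⟨h, hh, hgh⟩ := hY.exists_nonneg_ge g
  obtain ⟨a, ha⟩ := exists_tendsto_atBot_of_nonneg hD hh
  obtain ⟨b, hb⟩ := exists_tendsto_atBot_of_nonneg hD (subPre_sub_nonneg hgh)
  exact ⟨a - b, by simpa using ha.sub hb⟩

variable {ι : Type*} {l : Filter ι} [l.NeBot] {x : ι → X} {B : Y →ₗ[ℝ] ℝ}

theorem mem_obDual_of_tendsto
    (hB : ∀ g : Y, Tendsto (fun i => (g : X →ₗ[ℝ] ℝ) (x i)) l (𝓝 (B g)))
    {u : X} (hx : ∀ᶠ i in l, 0 ≤ x i ∧ x i ≤ u) : B ∈ obDual Y := by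
  intro w
  refine ⟨(w : X →ₗ[ℝ] ℝ) u, fun g hwg hgw => le_of_tendsto (hB g).abs ?_⟩
  filter_upwards [hx] with i ⟨hi, hiu⟩
  have h₁ := hwg (x i) hi
  have h₂ := hgw (x i) hi
  have h₃ := (hwg.trans hgw) (u - x i) (sub_nonneg.2 hiu)
  simp only [Submodule.coe_neg, LinearMap.neg_apply, map_sub] at h₁ h₂ h₃
  rw [abs_le]
  constructor <;> linarith

theorem mem_lowerBounds_of_tendsto
    (hB : ∀ g : Y, Tendsto (fun i => (g : X →ₗ[ℝ] ℝ) (x i)) l (𝓝 (B g)))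
    (hBmem : B ∈ obDual Y) {D : Set X} (hD : ∀ d ∈ D, ∀ᶠ i in l, x i ≤ d) :
    (⟨B, hBmem⟩ : obDual Y) ∈ lowerBounds (hatEl X Y '' D) := by
  rintro _ ⟨d, hd, rfl⟩ g hg
  exact le_of_tendsto (hB g) ((hD d hd).mono fun i hi => subPre_monotone hg hi)

theorem IsIdealOfOrderDual.tendsto_atBot_zero (hY : IsIdealOfOrderDual Y) {D : Set X}
    (hne : D.Nonempty)
    (hdir : DirectedOn (· ≥ ·) D) (hglb : IsGLB D 0)
    (hreg : IsGLB (hatEl X Y '' D) (0 : obDual ↥Y)) (f : Y) :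
    Tendsto (fun d : D => (f : X →ₗ[ℝ] ℝ) d) atBot (𝓝 0) := by
  have := hne.to_subtype
  have := hdir.isCodirectedOrder
  obtain ⟨d₀, hd₀⟩ := hne
  obtain ⟨B, hB⟩ := exists_linearMap_tendsto (fun d : D => hatFun X Y d)
    (hY.exists_tendsto_atBot hglb.1)
  have hBmem : B ∈ obDual Y := mem_obDual_of_tendsto hB (u := d₀)
    ((eventually_le_atBot ⟨d₀, hd₀⟩).mono fun d hd => ⟨hglb.1 d.2, hd⟩)
  have hBle : (⟨B, hBmem⟩ : obDual Y) ≤ 0 :=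
    hreg.2 <| mem_lowerBounds_of_tendsto hB hBmem fun d hd =>
      eventually_le_atBot (⟨d, hd⟩ : D)
  have hBpos : ∀ g : Y, 0 ≤ g → B g = 0 := fun g hg =>
    le_antisymm (by simpa using hBle g hg)
      (ge_of_tendsto' (hB g) fun d => subPre_apply_nonneg hg (hglb.1 d.2))
  obtain ⟨h, hh, hfh⟩ := hY.exists_nonneg_ge f
  have hBf : B f = 0 := by
    rw [← sub_sub_cancel h f, map_sub, hBpos h hh, hBpos _ (subPre_sub_nonneg hfh), sub_zero]
  simpa [hBf] using hB f

end Limits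

theorem statement0_general {X : Type u} [Lattice X] [AddCommGroup X]
    [CovariantClass X X (· + ·) (· ≤ ·)] [Module ℝ X] [PosSMulMono ℝ X]
    (Y : Submodule ℝ (X →ₗ[ℝ] ℝ))
    (hideal : IsIdealOfOrderDual Y)
    (hreg : ∀ D : Set X, D.Nonempty → DirectedOn (· ≥ ·) D → IsGLB D 0 →
      IsGLB (hatEl X Y '' D) (0 : obDual ↥Y)) :
    ∀ f ∈ Y, OrdContE f := fun f hf => ordContE_of_tendsto fun D hne hdir hglb =>
  hideal.tendsto_atBot_zero hne hdir hglb (hreg D hne hdir hglb) ⟨f, hf⟩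

/-- If the canonical image of `X` in `Y~` is a regular sublattice, then every
functional in the separating order ideal `Y ⊆ X~` is order continuous. -/
theorem statement0 {X : Type u} [Lattice X] [AddCommGroup X]
    [CovariantClass X X (· + ·) (· ≤ ·)] [Module ℝ X] [PosSMulMono ℝ X]
    (harch : IsArch X)
    (Y : Submodule ℝ (X →ₗ[ℝ] ℝ))
    (hideal : IsIdealOfOrderDual Y)
    (hsep : ∀ x : X, x ≠ 0 → ∃ f ∈ Y, f x ≠ 0)
    (hreg : ∀ D : Set X, D.Nonempty → DirectedOn (· ≥ ·) D → IsGLB D 0 →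
      IsGLB (hatEl X Y '' D) (0 : obDual ↥Y)) :
    ∀ f ∈ Y, OrdContE f :=
  statement0_general Y hideal hreg
end

section
/- A functional y in the order dual X~ of a vector lattice X is order continuous if and only if y(x_α) → 0 for every eventually order bounded net x_α that is uo-convergent to 0. -/
/-!
The heart of the matter is that an order continuous `y ∈ X~` is uniformly small on `[-e, e]` for
`e` far enough down any `D ↓ 0`. For `x ∈ D` pick `u ∈ [0, x]` with `y u` within `ε` of
`sup y[0, x]`; as `u ⊓ e ↓ 0`, some `e ≤ x` in `D` has `|y (u ⊓ e)| < ε`, and for `z ∈ [0, e]`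
the element `(u - u ⊓ e) + z` still lies in `[0, x]`, which forces `y z < 2ε`. An eventually
order bounded uo-null net is order null, hence eventually in each such `[-e, e]`. Conversely,
`D ↓ 0` itself, indexed by `D` with the reversed order, is an order null net.
-/

set_option linter.unusedSectionVars false
set_option maxHeartbeats 1000000

open Filter Set

section VL

variable (X : Type*) [Lattice X] [AddCommGroup X]
  [CovariantClass X X (· + ·) (· ≤ ·)] [Module ℝ X] [PosSMulMono ℝ X]

noncomputable instance instSubPreBidual : Preorder (obDual ↥(obDual X)) :=
  instSubPre (↥(obDual X)) (obDual ↥(obDual X))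

end VL


open Topology

theorem OrdContE.neg {E : Type*} [AddCommGroup E] [Preorder E] [Module ℝ E] {f : E →ₗ[ℝ] ℝ}
    (hf : OrdContE f) : OrdContE (-f) := by
  intro D hne hdir hglb ε hε
  obtain ⟨d, hd, hsmall⟩ := hf D hne hdir hglb ε hε
  exact ⟨d, hd, fun e he hed => by simpa using hsmall e he hed⟩

theorem IsGLB.image_inf_left {α : Type*} [Lattice α] {D : Set α} {b : α} (hb : IsGLB D b)
    {a : α} (hba : b ≤ a) : IsGLB ((a ⊓ ·) '' D) b := by
  refine ⟨?_, fun c hc => hb.2 fun e he => (hc ⟨e, he, rfl⟩).trans inf_le_right⟩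
  rintro _ ⟨e, he, rfl⟩
  exact le_inf hba (hb.1 he)

section OrderedGroup

variable {X : Type*} [Lattice X] [AddCommGroup X] [AddLeftMono X]

section Net

variable {ι : Type*} [Preorder ι] {x : ι → X}

theorem oConvTo_zero_iff : OConvTo x 0 ↔ ∃ D : Set X, D.Nonempty ∧ DirectedOn (· ≥ ·) D ∧
    IsGLB D 0 ∧ ∀ d ∈ D, ∃ α₀, ∀ α, α₀ ≤ α → |x α| ≤ d := by
  have hsandwich (a d : X) : -d ≤ a ∧ a ≤ d ↔ |a| ≤ d := by rw [abs_le', neg_le, and_comm]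
  simp only [OConvTo, zero_sub, zero_add, hsandwich]

theorem OConvTo.uoConvTo_zero (hx : OConvTo x 0) : uoConvTo x 0 := by
  obtain ⟨D, hne, hdir, hglb, hD⟩ := oConvTo_zero_iff.1 hx
  refine fun u hu => oConvTo_zero_iff.2 ⟨D, hne, hdir, hglb, fun d hd => ?_⟩
  obtain ⟨α₀, hα₀⟩ := hD d hd
  refine ⟨α₀, fun α hα => ?_⟩
  rw [sub_zero, abs_of_nonneg (le_inf (abs_nonneg _) hu)]
  exact inf_le_left.trans (hα₀ α hα)

theorem uoConvTo.oConvTo_zero_of_eventually_abs_le [IsDirectedOrder ι] (hx : uoConvTo x 0)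
    {w : X} {α₀ : ι} (hw : ∀ α, α₀ ≤ α → |x α| ≤ w) : OConvTo x 0 := by
  have hw0 : 0 ≤ w := (abs_nonneg _).trans (hw α₀ le_rfl)
  obtain ⟨D, hne, hdir, hglb, hD⟩ := oConvTo_zero_iff.1 (hx w hw0)
  refine oConvTo_zero_iff.2 ⟨D, hne, hdir, hglb, fun d hd => ?_⟩
  obtain ⟨α₁, hα₁⟩ := hD d hd
  obtain ⟨α₂, h₀₂, h₁₂⟩ := exists_ge_ge α₀ α₁
  refine ⟨α₂, fun α hα => ?_⟩
  have hinf := hα₁ α (h₁₂.trans hα)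
  rwa [sub_zero, abs_of_nonneg (le_inf (abs_nonneg _) hw0),
    inf_eq_left.2 (hw α (h₀₂.trans hα))] at hinf

end Net

variable {D : Set X}

theorem abs_coe_orderDual_le (hglb : IsGLB D 0) {d : X} (hd : d ∈ D) {α : Dᵒᵈ}
    (hα : OrderDual.toDual ⟨d, hd⟩ ≤ α) : |((OrderDual.ofDual α : D) : X)| ≤ d := by
  rw [abs_of_nonneg (hglb.1 (OrderDual.ofDual α).2)]
  exact hα

theorem oConvTo_coe_orderDual (hne : D.Nonempty) (hdir : DirectedOn (· ≥ ·) D)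
    (hglb : IsGLB D 0) : OConvTo (fun α : Dᵒᵈ => ((OrderDual.ofDual α : D) : X)) 0 :=
  oConvTo_zero_iff.2 ⟨D, hne, hdir, hglb, fun d hd =>
    ⟨OrderDual.toDual ⟨d, hd⟩, fun _ hα => abs_coe_orderDual_le hglb hd hα⟩⟩

section Functional

variable [Module ℝ X] {f : X →ₗ[ℝ] ℝ}

theorem OrdContE.exists_mem_forall_lt (hf : f ∈ obDual X) (hoc : OrdContE f)
    {D : Set X} (hne : D.Nonempty) (hdir : DirectedOn (· ≥ ·) D) (hglb : IsGLB D 0)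
    {ε : ℝ} (hε : 0 < ε) :
    ∃ d ∈ D, ∀ z, 0 ≤ z → z ≤ d → f z < ε := by
  obtain ⟨x, hxD⟩ := hne
  have hx : 0 ≤ x := hglb.1 hxD
  obtain ⟨u, ⟨hu0, hux⟩, hu⟩ : ∃ u ∈ Icc 0 x, ∀ v ∈ Icc 0 x, f v < f u + ε / 2 := by
    obtain ⟨M, hM⟩ := hf x
    have hbdd : BddAbove (f '' Icc 0 x) := ⟨M, by
      rintro _ ⟨v, ⟨hv0, hvx⟩, rfl⟩
      exact (abs_le.1 (hM v ((neg_nonpos.2 hx).trans hv0) hvx)).2⟩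
    obtain ⟨_, ⟨u, hu, rfl⟩, hlt⟩ := exists_lt_of_lt_csSup ((nonempty_Icc.2 hx).image f)
      (sub_lt_self (sSup (f '' Icc 0 x)) (half_pos hε))
    exact ⟨u, hu, fun v hv => by linarith [le_csSup hbdd (mem_image_of_mem f hv)]⟩
  obtain ⟨_, ⟨e₀, he₀, rfl⟩, hsmall⟩ := hoc ((u ⊓ ·) '' D) ⟨_, mem_image_of_mem _ hxD⟩
    (hdir.mono_comp fun _ _ h => inf_le_inf_left u h) (hglb.image_inf_left hu0)
    (ε / 2) (half_pos hε)
  obtain ⟨e, heD, hee₀, hex⟩ := hdir e₀ he₀ x hxD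
  refine ⟨e, heD, fun z hz0 hze => ?_⟩
  have hue : |f (u ⊓ e)| < ε / 2 := hsmall _ ⟨e, heD, rfl⟩ (inf_le_inf_left u hee₀)
  have hdiff : u - u ⊓ e ≤ x - e := by
    rw [sub_inf, sub_self]
    exact sup_le (sub_nonneg.2 hex) (sub_le_sub_right hux e)
  have hmem : u - u ⊓ e + z ∈ Icc 0 x :=
    ⟨add_nonneg (sub_nonneg.2 inf_le_left) hz0,
      (add_le_add hdiff hze).trans_eq (sub_add_cancel x e)⟩
  have := hu _ hmem
  rw [map_add, map_sub] at this
  linarith [(abs_lt.1 hue).2]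

theorem OrdContE.exists_mem_forall_abs_lt (hf : f ∈ obDual X)
    (hoc : OrdContE f) {D : Set X} (hne : D.Nonempty) (hdir : DirectedOn (· ≥ ·) D)
    (hglb : IsGLB D 0) {ε : ℝ} (hε : 0 < ε) :
    ∃ d ∈ D, ∀ z, |z| ≤ d → |f z| < ε := by
  obtain ⟨d₁, hd₁, hf₁⟩ := hoc.exists_mem_forall_lt hf hne hdir hglb (half_pos hε)
  obtain ⟨d₂, hd₂, hf₂⟩ := hoc.neg.exists_mem_forall_lt (neg_mem hf) hne hdir hglb (half_pos hε)
  obtain ⟨d, hd, hdd₁, hdd₂⟩ := hdir d₁ hd₁ d₂ hd₂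
  have hsmall : ∀ z, 0 ≤ z → z ≤ d → |f z| < ε / 2 := fun z hz0 hzd =>
    abs_lt.2 ⟨by linarith [hf₂ z hz0 (hzd.trans hdd₂), LinearMap.neg_apply f z],
      hf₁ z hz0 (hzd.trans hdd₁)⟩
  refine ⟨d, hd, fun z hz => ?_⟩
  have hpos : z⁺ ≤ |z| := sup_le (le_abs_self z) (abs_nonneg z)
  have hneg : z⁻ ≤ |z| := sup_le (neg_le_abs z) (abs_nonneg z)
  calc |f z| = |f z⁺ - f z⁻| := by rw [← map_sub, posPart_sub_negPart]
    _ ≤ |f z⁺| + |f z⁻| := abs_sub _ _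
    _ < ε / 2 + ε / 2 := add_lt_add (hsmall _ (posPart_nonneg z) (hpos.trans hz))
        (hsmall _ (negPart_nonneg z) (hneg.trans hz))
    _ = ε := add_halves ε

theorem OConvTo.tendsto_of_ordContE {ι : Type*} [Preorder ι] {x : ι → X} (hx : OConvTo x 0) (hf : f ∈ obDual X)
    (hoc : OrdContE f) : Tendsto (fun α => f (x α)) atTop (𝓝 0) := by
  obtain ⟨D, hne, hdir, hglb, hD⟩ := oConvTo_zero_iff.1 hx
  refine NormedAddGroup.tendsto_nhds_zero.2 fun ε hε => ?_
  obtain ⟨d, hd, hsmall⟩ := hoc.exists_mem_forall_abs_lt hf hne hdir hglb hε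
  obtain ⟨α₀, hα₀⟩ := hD d hd
  filter_upwards [eventually_ge_atTop α₀] with α hα
  exact hsmall _ (hα₀ α hα)

end Functional

end OrderedGroup

theorem statement5_general {X : Type u} [Lattice X] [AddCommGroup X]
    [CovariantClass X X (· + ·) (· ≤ ·)] [Module ℝ X]
    (y : obDual X) :
    OrdContE (y : X →ₗ[ℝ] ℝ) ↔
      ∀ (ι : Type u) [Preorder ι] [Nonempty ι] [IsDirected ι (· ≤ ·)] (x : ι → X),
        uoConvTo x 0 → (∃ (w : X) (α₀ : ι), ∀ α, α₀ ≤ α → |x α| ≤ w) →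
        Filter.Tendsto (fun α => (y : X →ₗ[ℝ] ℝ) (x α)) Filter.atTop (nhds 0) := by
  refine ⟨fun hoc ι _ _ _ x hx ⟨w, α₀, hw⟩ =>
    (hx.oConvTo_zero_of_eventually_abs_le hw).tendsto_of_ordContE y.2 hoc,
    fun H D hne hdir hglb ε hε => ?_⟩
  have : Nonempty Dᵒᵈ := hne.to_subtype
  have : IsCodirectedOrder D := hdir.isCodirectedOrder
  have hnet := oConvTo_coe_orderDual hne hdir hglb
  obtain ⟨d₀, hd₀⟩ := hne
  have htend := H Dᵒᵈ _ hnet.uoConvTo_zero ⟨d₀, _, fun _ => abs_coe_orderDual_le hglb hd₀⟩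
  obtain ⟨α, hα⟩ := eventually_atTop.1 (NormedAddGroup.tendsto_nhds_zero.1 htend ε hε)
  exact ⟨_, (OrderDual.ofDual α).2, fun e he heα => hα (OrderDual.toDual ⟨e, he⟩) heα⟩

/-- `y ∈ X~` is order continuous iff `y(x_α) → 0` for every eventually order
bounded uo-null net `x_α`. -/
theorem statement5 {X : Type u} [Lattice X] [AddCommGroup X]
    [CovariantClass X X (· + ·) (· ≤ ·)] [Module ℝ X] [PosSMulMono ℝ X]
    (harch : IsArch X)
    (y : obDual X) :
    OrdContE (y : X →ₗ[ℝ] ℝ) ↔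
      ∀ (ι : Type u) [Preorder ι] [Nonempty ι] [IsDirected ι (· ≤ ·)] (x : ι → X),
        uoConvTo x 0 → (∃ (w : X) (α₀ : ι), ∀ α, α₀ ≤ α → |x α| ≤ w) →
        Filter.Tendsto (fun α => (y : X →ₗ[ℝ] ℝ) (x α)) Filter.atTop (nhds 0) :=
  statement5_general y
end
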